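/- Let S be a quasi-order on X, a, b ∈ X^ω, and let f, g : ω → ω be injections witnessing a S^inj b and b S^inj a respectively. Then for every ordinal α and every n: n ∈ I_α(a) iff f(n) ∈ I_α(b), and n ∈ I_α(b) iff g(n) ∈ I_α(a). -/

import Mathlib

/-!
Everything is proved by induction on `α`. The key fact is that an injective index map `h` with
`a n S a (h n)` for all `n` (such as `g ∘ f`) maps `I_α(a)` into itself: if `n` is `h`-periodic,
then `a (h n) S a n` and `I_α(a)` is downward closed under `S`; otherwise the `h`-orbit of `h n`
is infinite and witnesses `h n ∈ I_{α+1}(a)`.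

For the backward implication `f n ∈ I_α(b) → n ∈ I_α(a)`, `g` maps the infinitely many
`S`-successors of `f n` in `I_α(b)` injectively to `S`-successors of `n` in `I_α(a)`; these lie
in `I_α(a)` because `f ∘ g` preserves `I_α(b)`. The forward implication follows by applying the
backward one to the pair `(g, f)` at `f n`, since `g (f n) ∈ I_α(a)`.
-/

/-- The derived sets `I_α(a)`. -/
noncomputable def Iset {X : Type*} (S : X → X → Prop) (a : ℕ → X) (α : Ordinal) : Set ℕ :=
  Ordinal.limitRecOn α
    Set.univ
    (fun _ A => {n ∈ A | {m ∈ A | S (a n) (a m)}.Infinite})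
    (fun o _ IH => ⋂ (β : Ordinal) (h : β < o), IH β h)

open Function Set

lemma Function.Injective.injective_iterate_apply {α : Type*} {h : α → α} (hh : Injective h)
    {x : α} (hx : x ∉ periodicPts h) : Injective (h^[·] x) := by
  intro i j hij
  by_contra hne
  rcases lt_or_gt_of_ne hne with hlt | hlt
  · exact hx (mk_mem_periodicPts (by lia) (iterate_cancel hh hij.symm))
  · exact hx (mk_mem_periodicPts (by lia) (iterate_cancel hh hij))

section Iset

variable {X : Type*} {S : X → X → Prop} {a b : ℕ → X}

@[simp]
lemma Iset_zero : Iset S a 0 = univ :=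
  Ordinal.limitRecOn_zero _ _ _

lemma Iset_add_one (α : Ordinal) :
    Iset S a (α + 1) = {n ∈ Iset S a α | {m ∈ Iset S a α | S (a n) (a m)}.Infinite} :=
  Ordinal.limitRecOn_add_one _ _ _ _

lemma mem_Iset_iff_of_isSuccLimit {o : Ordinal} (ho : Order.IsSuccLimit o) {n : ℕ} :
    n ∈ Iset S a o ↔ ∀ β < o, n ∈ Iset S a β := by
  rw [Iset, Ordinal.limitRecOn_limit _ _ _ _ ho]
  simp only [mem_iInter]
  rfl

lemma mem_Iset_of_rel [IsTrans X S] {α : Ordinal} {n n' : ℕ} (hS : S (a n') (a n))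
    (hn : n ∈ Iset S a α) : n' ∈ Iset S a α := by
  induction α using Ordinal.limitRecOn generalizing n n' with
  | zero => simp
  | add_one α IH =>
    rw [Iset_add_one] at hn ⊢
    refine ⟨IH hS hn.1, hn.2.mono fun m hm => ⟨hm.1, trans_of S hS hm.2⟩⟩
  | limit o ho IH =>
    rw [mem_Iset_iff_of_isSuccLimit ho] at hn ⊢
    exact fun β hβ => IH β hβ hS (hn β hβ)

lemma rel_iterate [IsPreorder X S] {h : ℕ → ℕ} (hw : ∀ j, S (a j) (a (h j))) (k j : ℕ) :
    S (a j) (a (h^[k] j)) := by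
  induction k generalizing j with
  | zero => exact refl_of S _
  | succ k IH => exact trans_of S (hw j) (IH (h j))

lemma mapsTo_Iset [IsPreorder X S] {h : ℕ → ℕ} (hh : Injective h)
    (hw : ∀ j, S (a j) (a (h j))) (α : Ordinal) : MapsTo h (Iset S a α) (Iset S a α) := by
  induction α using Ordinal.limitRecOn with
  | zero => simp
  | add_one α IH =>
    intro n hn
    by_cases hper : n ∈ periodicPts h
    · obtain ⟨p, hp, hpn⟩ := mem_periodicPts.mp hper
      have hback : S (a (h n)) (a n) := by
        obtain ⟨q, rfl⟩ := Nat.exists_eq_succ_of_ne_zero hp.ne'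
        have hq : h^[q] (h n) = n := (iterate_succ_apply h q n).symm.trans hpn.eq
        simpa only [hq] using rel_iterate hw q (h n)
      exact mem_Iset_of_rel hback hn
    · rw [Iset_add_one] at hn ⊢
      refine ⟨IH hn.1, infinite_of_injective_forall_mem (f := fun k => h^[k] (h n)) ?_ ?_⟩
      · intro i j hij
        simpa using hh.injective_iterate_apply hper (a₁ := i + 1) (a₂ := j + 1) hij
      · exact fun k => ⟨IH.iterate k (IH hn.1), rel_iterate hw k (h n)⟩
  | limit o ho IH =>
    intro n hn
    rw [mem_Iset_iff_of_isSuccLimit ho] at hn ⊢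
    exact fun β hβ => IH β hβ (hn β hβ)

lemma preimage_Iset_subset [IsPreorder X S] {f g : ℕ → ℕ} (hf : Injective f) (hg : Injective g)
    (hfw : ∀ n, S (a n) (b (f n))) (hgw : ∀ n, S (b n) (a (g n))) (α : Ordinal) :
    f ⁻¹' Iset S b α ⊆ Iset S a α := by
  induction α using Ordinal.limitRecOn with
  | zero => simp
  | add_one α IH =>
    intro n hn
    rw [mem_preimage, Iset_add_one] at hn
    rw [Iset_add_one]
    have hfg : MapsTo (f ∘ g) (Iset S b α) (Iset S b α) :=
      mapsTo_Iset (hf.comp hg) (fun j => trans_of S (hgw j) (hfw (g j))) α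
    have hsucc : g '' {k ∈ Iset S b α | S (b (f n)) (b k)} ⊆
        {m ∈ Iset S a α | S (a n) (a m)} := by
      rintro _ ⟨k, ⟨hk, hnk⟩, rfl⟩
      exact ⟨IH (hfg hk), trans_of S (hfw n) (trans_of S hnk (hgw k))⟩
    exact ⟨IH hn.1, (hn.2.image hg.injOn).mono hsucc⟩
  | limit o ho IH =>
    intro n hn
    rw [mem_preimage, mem_Iset_iff_of_isSuccLimit ho] at hn
    rw [mem_Iset_iff_of_isSuccLimit ho]
    exact fun β hβ => IH β hβ (hn β hβ)

lemma mem_Iset_iff_mem_Iset_apply [IsPreorder X S] {f g : ℕ → ℕ} (hf : Injective f)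
    (hg : Injective g) (hfw : ∀ n, S (a n) (b (f n))) (hgw : ∀ n, S (b n) (a (g n)))
    (α : Ordinal) (n : ℕ) : n ∈ Iset S a α ↔ f n ∈ Iset S b α := by
  refine ⟨fun hn => ?_, fun hn => preimage_Iset_subset hf hg hfw hgw α hn⟩
  have hgf : g (f n) ∈ Iset S a α :=
    mapsTo_Iset (hg.comp hf) (fun j => trans_of S (hfw j) (hgw (f j))) α hn
  exact preimage_Iset_subset hg hf hgw hfw α hgf

end Iset

/-- If `f, g` witness `a S^inj b` and `b S^inj a`, then `f` and `g` respect the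
derived sets: `n ∈ I_α(a) ↔ f(n) ∈ I_α(b)` and `n ∈ I_α(b) ↔ g(n) ∈ I_α(a)`. -/
theorem stmt_9 {X : Type*} (S : X → X → Prop)
    (hrefl : ∀ x, S x x) (htrans : ∀ x y z, S x y → S y z → S x z)
    (a b : ℕ → X) (f g : ℕ → ℕ)
    (hf : Function.Injective f) (hg : Function.Injective g)
    (hfw : ∀ n, S (a n) (b (f n))) (hgw : ∀ n, S (b n) (a (g n))) :
    (∀ (α : Ordinal) (n : ℕ), n ∈ Iset S a α ↔ f n ∈ Iset S b α) ∧
    (∀ (α : Ordinal) (n : ℕ), n ∈ Iset S b α ↔ g n ∈ Iset S a α) := by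
  have : IsPreorder X S := { refl := hrefl, trans := htrans }
  exact ⟨mem_Iset_iff_mem_Iset_apply hf hg hfw hgw, mem_Iset_iff_mem_Iset_apply hg hf hgw hfw⟩
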